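/- Fix real W×W matrices T₁,…,T_{N−1} and E ∈ ℝ. Consider the map 𝔉 sending (V₁,…,V_N) to (U₁,…,U_N), where V₁,…,V_N are real symmetric W×W matrices, U₁ = V₁ − E, and U_k = V_k − E − T_{k−1}ᵗ U_{k−1}^{−1} T_{k−1} for k ≥ 2, defined on the open set of tuples for which U₁,…,U_{N−1} are invertible. Identifying each symmetric matrix with the vector of its entries (v_{p,q})_{1≤p≤q≤W} ∈ ℝ^{W(W+1)/2}, the Jacobian determinant of 𝔉 : ℝ^{N·W(W+1)/2} → ℝ^{N·W(W+1)/2} equals 1 at every point of its domain; in particular 𝔉 is an injective, Lebesgue-measure-preserving map on its domain. -/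

import Mathlib

open Matrix MeasureTheory

/-- Index set for the independent entries of a symmetric `W × W` matrix:
pairs `(p, q)` with `p ≤ q`. -/
abbrev SymIdx (W : ℕ) := {x : Fin W × Fin W // x.1 ≤ x.2}

/-- The symmetric matrix built from a vector of entries `(v_{p,q})_{p ≤ q}`. -/
def toSymm {W : ℕ} (v : SymIdx W → ℝ) : Matrix (Fin W) (Fin W) ℝ :=
  Matrix.of fun p q => if h : p ≤ q then v ⟨(p, q), h⟩ else v ⟨(q, p), (le_total p q).resolve_left h⟩

/-- The Schur complements `U₁, U₂, …` (0-based) built from symmetric-entry vectors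
`v 0, v 1, …` : `U₁ = V₁ - E`, `U_{k+1} = V_{k+1} - E - T_kᵗ U_k⁻¹ T_k`,
where `V_k = toSymm (v (k-1))`. -/
noncomputable def schurFromSym (W : ℕ) (E : ℝ) (T : ℕ → Matrix (Fin W) (Fin W) ℝ)
    (v : ℕ → SymIdx W → ℝ) : ℕ → Matrix (Fin W) (Fin W) ℝ
  | 0 => toSymm (v 0) - E • 1
  | k + 1 => toSymm (v (k + 1)) - E • 1 - (T k)ᵀ * (schurFromSym W E T v k)⁻¹ * T k

/-- Extension of a `Fin N`-indexed tuple of entry vectors to an `ℕ`-indexed one. -/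
def extTuple {W N : ℕ} (x : Fin N → SymIdx W → ℝ) : ℕ → SymIdx W → ℝ :=
  fun j => if h : j < N then x ⟨j, h⟩ else 0

/-- The Schenker change of variables `𝔉 : (V₁, …, V_N) ↦ (U₁, …, U_N)` on tuples of
symmetric matrices, in the entry coordinates `(v_{p,q})_{p ≤ q}`. -/
noncomputable def schurMap (W N : ℕ) (E : ℝ) (T : ℕ → Matrix (Fin W) (Fin W) ℝ)
    (x : Fin N → SymIdx W → ℝ) : Fin N → SymIdx W → ℝ :=
  fun k pq => schurFromSym W E T (extTuple x) k pq.1.1 pq.1.2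

/-- The domain of `𝔉` : the tuples for which `U₁, …, U_{N-1}` are invertible. -/
def schurDomain (W N : ℕ) (E : ℝ) (T : ℕ → Matrix (Fin W) (Fin W) ℝ) :
    Set (Fin N → SymIdx W → ℝ) :=
  {x | ∀ k : ℕ, k + 1 < N → IsUnit (schurFromSym W E T (extTuple x) k).det}

/-!
The `k`-th component of `𝔉(V) - V` depends only on `V₁, …, V_{k-1}`, so the derivative of `𝔉`
is the identity plus a strictly block-lower-triangular, hence nilpotent, map, and its determinant
is `1`. `𝔉` is injective because `V_k = U_k + E + T_{k-1}ᵗ U_{k-1}⁻¹ T_{k-1}` recovers `V` from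
`U`, and the change of variables formula then shows that it preserves Lebesgue measure.
-/

section Unipotent

variable {R M : Type*} [CommRing R] [AddCommGroup M] [Module R M]

theorem LinearMap.det_one_sub_of_isNilpotent [IsDomain R] [Module.Finite R M] [Module.Free R M]
    {φ : Module.End R M} (hφ : IsNilpotent φ) : LinearMap.det (1 - φ) = 1 := by
  have h := LinearMap.eval_charpoly φ 1
  rw [hφ.charpoly_eq_X_pow_finrank, map_one] at h
  simpa using h.symm

theorem Module.End.isNilpotent_of_apply_eq_zero_of_forall_lt {N : ℕ}
    (D : Module.End R (Fin N → M)) (hD : ∀ h k, (∀ j < k, h j = 0) → D h k = 0) :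
    IsNilpotent D := by
  have hpow : ∀ m h (j : Fin N), j.val < m → (D ^ m) h j = 0 := by
    intro m
    induction m with
    | zero => intro h j hj; omega
    | succ m ih =>
      intro h j hj
      rw [pow_succ', Module.End.mul_apply]
      exact hD _ j fun i hij => ih h i (by omega)
  exact ⟨N, LinearMap.ext fun h => funext fun j => hpow N h j j.isLt⟩

theorem LinearMap.det_eq_one_of_apply_eq_self [IsDomain R] [Module.Finite R M] [Module.Free R M]
    {N : ℕ} (L : Module.End R (Fin N → M)) (hL : ∀ h k, (∀ j < k, h j = 0) → L h k = h k) :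
    LinearMap.det L = 1 := by
  have hnil : IsNilpotent (1 - L) :=
    Module.End.isNilpotent_of_apply_eq_zero_of_forall_lt _ fun h k hh => by simp [hL h k hh]
  simpa using LinearMap.det_one_sub_of_isNilpotent hnil

end Unipotent

section Calculus

variable {𝕜 M : Type*} [NontriviallyNormedField 𝕜] [NormedAddCommGroup M] [NormedSpace 𝕜 M]
  {N : ℕ} {F : (Fin N → M) → (Fin N → M)} {x : Fin N → M}

theorem fderiv_apply_eq_self_of_sub_self_congr (hF : DifferentiableAt 𝕜 F x) (k : Fin N)
    (hk : ∀ y y', (∀ j < k, y j = y' j) → F y k - y k = F y' k - y' k)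
    (h : Fin N → M) (hh : ∀ j < k, h j = 0) : fderiv 𝕜 F x h k = h k := by
  have hline : HasDerivAt (fun t : 𝕜 => F (x + t • h) k - (x + t • h) k)
      (fderiv 𝕜 F x h k - h k) 0 := by
    have hpath : HasDerivAt (fun t : 𝕜 => x + t • h) h 0 := by
      simpa using ((hasDerivAt_id (0 : 𝕜)).smul_const h).const_add x
    exact (hasDerivAt_pi.1 (hF.hasFDerivAt.comp_hasDerivAt_of_eq (0 : 𝕜) hpath (by simp)) k).sub
      (hasDerivAt_pi.1 hpath k)
  have hconst : (fun t : 𝕜 => F (x + t • h) k - (x + t • h) k) = fun _ => F x k - x k :=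
    funext fun t => hk _ _ fun j hj => by simp [hh j hj]
  rw [hconst] at hline
  exact sub_eq_zero.1 (hline.unique (hasDerivAt_const _ _))

theorem det_fderiv_eq_one_of_sub_self_congr [FiniteDimensional 𝕜 M]
    (hF : DifferentiableAt 𝕜 F x)
    (hF_sub : ∀ k y y', (∀ j < k, y j = y' j) → F y k - y k = F y' k - y' k) :
    LinearMap.det (fderiv 𝕜 F x : (Fin N → M) →ₗ[𝕜] (Fin N → M)) = 1 :=
  LinearMap.det_eq_one_of_apply_eq_self _ fun h k =>
    fderiv_apply_eq_self_of_sub_self_congr hF k (hF_sub k) h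

end Calculus

theorem MeasureTheory.Measure.addHaar_image_eq_of_det_fderiv_eq_one {E : Type*}
    [NormedAddCommGroup E] [NormedSpace ℝ E] [FiniteDimensional ℝ E] [MeasurableSpace E]
    [BorelSpace E] (μ : Measure E) [μ.IsAddHaarMeasure] {f : E → E} {s : Set E}
    (hs : MeasurableSet s) (hf : ∀ x ∈ s, DifferentiableAt ℝ f x)
    (hdet : ∀ x ∈ s, (fderiv ℝ f x).det = 1) (hinj : Set.InjOn f s) :
    μ (f '' s) = μ s := by
  rw [← lintegral_abs_det_fderiv_eq_addHaar_image μ hs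
    (fun x hx => (hf x hx).hasFDerivAt.hasFDerivWithinAt) hinj,
    setLIntegral_congr_fun hs fun x hx => by rw [hdet x hx, abs_one, ENNReal.ofReal_one],
    setLIntegral_one]

section MatrixCalculus

variable {𝕜 X n : Type*} [NontriviallyNormedField 𝕜] [NormedAddCommGroup X] [NormedSpace 𝕜 X]
  [Fintype n] {A B : X → Matrix n n 𝕜} {x : X}

theorem differentiableAt_matrix_mul (hA : ∀ i j, DifferentiableAt 𝕜 (fun y => A y i j) x)
    (hB : ∀ i j, DifferentiableAt 𝕜 (fun y => B y i j) x) (i j : n) :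
    DifferentiableAt 𝕜 (fun y => (A y * B y) i j) x := by
  simp only [Matrix.mul_apply]
  exact DifferentiableAt.fun_sum fun l _ => (hA i l).mul (hB l j)

theorem differentiableAt_matrix_det [DecidableEq n]
    (hA : ∀ i j, DifferentiableAt 𝕜 (fun y => A y i j) x) :
    DifferentiableAt 𝕜 (fun y => (A y).det) x := by
  simp only [Matrix.det_apply']
  exact DifferentiableAt.fun_sum fun σ _ =>
    (HasFDerivAt.finsetProd fun i _ => (hA (σ i) i).hasFDerivAt).differentiableAt.const_mul _

theorem differentiableAt_matrix_inv [DecidableEq n]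
    (hA : ∀ i j, DifferentiableAt 𝕜 (fun y => A y i j) x) (hdet : IsUnit (A x).det)
    (i j : n) : DifferentiableAt 𝕜 (fun y => (A y)⁻¹ i j) x := by
  have hadj : DifferentiableAt 𝕜 (fun y => (A y).adjugate i j) x := by
    simp only [Matrix.adjugate_apply]
    refine differentiableAt_matrix_det fun a b => ?_
    simp only [Matrix.updateRow_apply]
    split_ifs
    · exact differentiableAt_const _
    · exact hA a b
  simp only [Matrix.inv_def, Ring.inverse_eq_inv', Matrix.smul_apply, smul_eq_mul]
  exact ((differentiableAt_matrix_det hA).inv hdet.ne_zero).mul hadj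

end MatrixCalculus

section Schur

variable {W N : ℕ} {E : ℝ} {T : ℕ → Matrix (Fin W) (Fin W) ℝ}

theorem toSymm_apply_coe (v : SymIdx W → ℝ) (pq : SymIdx W) :
    toSymm v pq.1.1 pq.1.2 = v pq := by
  simp [toSymm, pq.2]

theorem toSymm_isSymm (v : SymIdx W → ℝ) : (toSymm v).IsSymm := by
  ext p q
  rcases lt_trichotomy p q with h | rfl | h
  · simp [toSymm, h.le, not_le.2 h]
  · rfl
  · simp [toSymm, h.le, not_le.2 h]

theorem Matrix.IsSymm.ext_of_le {n α : Type*} [LinearOrder n] {A B : Matrix n n α}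
    (hA : A.IsSymm) (hB : B.IsSymm) (h : ∀ p q, p ≤ q → A p q = B p q) : A = B := by
  ext p q
  rcases le_total p q with hpq | hqp
  · exact h p q hpq
  · rw [← hA.apply, ← hB.apply, h q p hqp]

theorem extTuple_apply (x : Fin N → SymIdx W → ℝ) (k : Fin N) : extTuple x k = x k := by
  simp [extTuple]

theorem schurFromSym_isSymm (v : ℕ → SymIdx W → ℝ) : ∀ k, (schurFromSym W E T v k).IsSymm
  | 0 => (toSymm_isSymm _).sub (isSymm_one.smul E)
  | k + 1 => by
    refine ((toSymm_isSymm _).sub (isSymm_one.smul E)).sub ?_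
    rw [IsSymm, transpose_mul, transpose_mul, transpose_transpose, transpose_nonsing_inv,
      schurFromSym_isSymm v k, mul_assoc]

theorem schurFromSym_congr {v w : ℕ → SymIdx W → ℝ} :
    ∀ k, (∀ j ≤ k, v j = w j) → schurFromSym W E T v k = schurFromSym W E T w k
  | 0, h => by rw [schurFromSym, schurFromSym, h 0 le_rfl]
  | k + 1, h => by
    rw [schurFromSym, schurFromSym, h (k + 1) le_rfl,
      schurFromSym_congr k fun j hj => h j (hj.trans k.le_succ)]

theorem schurFromSym_sub_toSymm_congr {v w : ℕ → SymIdx W → ℝ} (k : ℕ)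
    (h : ∀ j < k, v j = w j) :
    schurFromSym W E T v k - toSymm (v k) = schurFromSym W E T w k - toSymm (w k) := by
  cases k with
  | zero => simp [schurFromSym]
  | succ k =>
    simp only [schurFromSym, schurFromSym_congr k fun j hj => h j (Nat.lt_succ_of_le hj)]
    abel

theorem toSymm_eq_of_schurFromSym_eq {v w : ℕ → SymIdx W → ℝ} {k : ℕ}
    (h : ∀ j ≤ k, schurFromSym W E T v j = schurFromSym W E T w j) :
    toSymm (v k) = toSymm (w k) := by
  cases k with
  | zero => simpa [schurFromSym] using h 0 le_rfl
  | succ k =>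
    have hk := h (k + 1) le_rfl
    rw [schurFromSym, schurFromSym, h k k.le_succ] at hk
    simpa using hk

theorem schurMap_injective : Function.Injective (schurMap W N E T) := by
  intro x y hxy
  have hU : ∀ k < N, schurFromSym W E T (extTuple x) k = schurFromSym W E T (extTuple y) k :=
    fun k hk => (schurFromSym_isSymm _ k).ext_of_le (schurFromSym_isSymm _ k) fun p q hpq =>
      congrFun (congrFun hxy ⟨k, hk⟩) ⟨(p, q), hpq⟩
  funext k pq
  have hV := toSymm_eq_of_schurFromSym_eq (k := k) fun j hj => hU j (hj.trans_lt k.isLt)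
  rw [extTuple_apply, extTuple_apply] at hV
  rw [← toSymm_apply_coe (x k), ← toSymm_apply_coe (y k), hV]

theorem schurMap_sub_self_congr (k : Fin N) (y y' : Fin N → SymIdx W → ℝ)
    (h : ∀ j < k, y j = y' j) : schurMap W N E T y k - y k = schurMap W N E T y' k - y' k := by
  have hU := schurFromSym_sub_toSymm_congr (E := E) (T := T) (v := extTuple y)
    (w := extTuple y') k fun j hj => by
      simpa [extTuple, hj.trans k.isLt] using h ⟨j, hj.trans k.isLt⟩ hj
  funext pq
  have := congrFun (congrFun hU pq.1.1) pq.1.2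
  simpa [schurMap, toSymm_apply_coe, extTuple_apply] using this

theorem differentiableAt_toSymm_extTuple (k : ℕ) (p q : Fin W) (x : Fin N → SymIdx W → ℝ) :
    DifferentiableAt ℝ (fun y : Fin N → SymIdx W → ℝ => toSymm (extTuple y k) p q) x := by
  simp only [toSymm, extTuple, of_apply]
  split_ifs <;> fun_prop

theorem differentiableAt_schurFromSym (x : Fin N → SymIdx W → ℝ) (k : ℕ)
    (hx : ∀ j < k, IsUnit (schurFromSym W E T (extTuple x) j).det) (p q : Fin W) :
    DifferentiableAt ℝ (fun y => schurFromSym W E T (extTuple y) k p q) x := by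
  induction k generalizing p q with
  | zero =>
    simp only [schurFromSym, Matrix.sub_apply]
    exact (differentiableAt_toSymm_extTuple 0 p q x).sub_const _
  | succ k ih =>
    have hinv := differentiableAt_matrix_inv (ih fun j hj => hx j (hj.trans k.lt_succ_self))
      (hx k k.lt_succ_self)
    have hcorr := differentiableAt_matrix_mul (B := fun _ => T k)
      (differentiableAt_matrix_mul (A := fun _ => (T k)ᵀ) (fun _ _ => differentiableAt_const _)
        hinv) (fun _ _ => differentiableAt_const _) p q
    simp only [schurFromSym, Matrix.sub_apply]
    exact ((differentiableAt_toSymm_extTuple (k + 1) p q x).sub_const _).sub hcorr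

theorem differentiableAt_schurMap {x : Fin N → SymIdx W → ℝ} (hx : x ∈ schurDomain W N E T) :
    DifferentiableAt ℝ (schurMap W N E T) x := by
  refine differentiableAt_pi.2 fun k => differentiableAt_pi.2 fun pq => ?_
  exact differentiableAt_schurFromSym x k (fun j hj => hx j (by omega)) pq.1.1 pq.1.2

end Schur

theorem statement5_general (W N : ℕ) (E : ℝ)
    (T : ℕ → Matrix (Fin W) (Fin W) ℝ) :
    (∀ x ∈ schurDomain W N E T,
      DifferentiableAt ℝ (schurMap W N E T) x ∧
      LinearMap.det
        ((fderiv ℝ (schurMap W N E T) x :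
            (Fin N → SymIdx W → ℝ) →L[ℝ] (Fin N → SymIdx W → ℝ)) :
          (Fin N → SymIdx W → ℝ) →ₗ[ℝ] (Fin N → SymIdx W → ℝ)) = 1) ∧
    Set.InjOn (schurMap W N E T) (schurDomain W N E T) ∧
    (∀ s ⊆ schurDomain W N E T, MeasurableSet s →
      volume (schurMap W N E T '' s) = volume s) := by
  have hJac : ∀ x ∈ schurDomain W N E T, DifferentiableAt ℝ (schurMap W N E T) x ∧
      LinearMap.det (fderiv ℝ (schurMap W N E T) x :
        (Fin N → SymIdx W → ℝ) →ₗ[ℝ] (Fin N → SymIdx W → ℝ)) = 1 := fun x hx =>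
    ⟨differentiableAt_schurMap hx,
      det_fderiv_eq_one_of_sub_self_congr (differentiableAt_schurMap hx) schurMap_sub_self_congr⟩
  refine ⟨hJac, schurMap_injective.injOn, fun s hs hsm => ?_⟩
  exact volume.addHaar_image_eq_of_det_fderiv_eq_one hsm (fun x hx => (hJac x (hs hx)).1)
    (fun x hx => (hJac x (hs hx)).2) schurMap_injective.injOn

/-- The Schenker change of variables has Jacobian determinant `1` at every point of its
domain; in particular it is injective and Lebesgue-measure-preserving on its domain. -/
theorem statement5 (W N : ℕ) (hW : 0 < W) (hN : 0 < N) (E : ℝ)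
    (T : ℕ → Matrix (Fin W) (Fin W) ℝ) :
    (∀ x ∈ schurDomain W N E T,
      DifferentiableAt ℝ (schurMap W N E T) x ∧
      LinearMap.det
        ((fderiv ℝ (schurMap W N E T) x :
            (Fin N → SymIdx W → ℝ) →L[ℝ] (Fin N → SymIdx W → ℝ)) :
          (Fin N → SymIdx W → ℝ) →ₗ[ℝ] (Fin N → SymIdx W → ℝ)) = 1) ∧
    Set.InjOn (schurMap W N E T) (schurDomain W N E T) ∧
    (∀ s ⊆ schurDomain W N E T, MeasurableSet s →
      volume (schurMap W N E T '' s) = volume s) :=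
  statement5_general W N E T
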